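/- Let $R$ be a root system with simple roots $S$, let $\alpha \in S$ be such that the fundamental weight $\varpi_\alpha$ is minuscule (i.e. $\langle \varpi_\alpha, \beta^\vee\rangle \le 1$ for all $\beta \in R^+$), let $I = S \setminus \{\alpha\}$, and let $w \in W$ be a minimal-length representative of its coset in $W/W_I$ (i.e. $w(I) \subseteq R^+$). Then for any two positive roots $\mu, \nu$ with $w^{-1}(\mu) \in R^-$ and $w^{-1}(\nu) \in R^-$, one has $\langle \mu, \nu^\vee \rangle \ge 0$. -/

import Mathlib

open scoped RealInnerProductSpace

noncomputable section

variable {V : Type} [NormedAddCommGroup V] [InnerProductSpace ℝ V]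

/-- The reflection of `V` in the hyperplane orthogonal to `α`
(the identity map when `α = 0`). -/
def reflVec (α : V) : V ≃ₗ[ℝ] V where
  toFun x := x - (2 * ⟪x, α⟫ / ⟪α, α⟫) • α
  invFun x := x - (2 * ⟪x, α⟫ / ⟪α, α⟫) • α
  map_add' x y := by
    try dsimp only
    have h : 2 * ⟪x + y, α⟫ / ⟪α, α⟫ = 2 * ⟪x, α⟫ / ⟪α, α⟫ + 2 * ⟪y, α⟫ / ⟪α, α⟫ := by
      rw [inner_add_left]; ring
    rw [h, add_smul]; abel
  map_smul' r x := by
    try dsimp only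
    have h : 2 * ⟪r • x, α⟫ / ⟪α, α⟫ = r * (2 * ⟪x, α⟫ / ⟪α, α⟫) := by
      rw [real_inner_smul_left]; ring
    simp only [RingHom.id_apply]
    rw [h, mul_smul, smul_sub]
  left_inv x := by
    dsimp only
    by_cases h : (⟪α, α⟫ : ℝ) = 0
    · simp [inner_self_eq_zero.mp h]
    · have h2 : 2 * ⟪x - (2 * ⟪x, α⟫ / ⟪α, α⟫) • α, α⟫ / ⟪α, α⟫
          = -(2 * ⟪x, α⟫ / ⟪α, α⟫) := by
        rw [inner_sub_left, real_inner_smul_left]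
        field_simp
        ring
      rw [h2, neg_smul, sub_neg_eq_add, sub_add_cancel]
  right_inv x := by
    dsimp only
    by_cases h : (⟪α, α⟫ : ℝ) = 0
    · simp [inner_self_eq_zero.mp h]
    · have h2 : 2 * ⟪x - (2 * ⟪x, α⟫ / ⟪α, α⟫) • α, α⟫ / ⟪α, α⟫
          = -(2 * ⟪x, α⟫ / ⟪α, α⟫) := by
        rw [inner_sub_left, real_inner_smul_left]
        field_simp
        ring
      rw [h2, neg_smul, sub_neg_eq_add, sub_add_cancel]

/-- The pairing `⟨x, y^∨⟩ = 2(x,y)/(y,y)` of a vector with the coroot of `y`. -/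
def cpair (x y : V) : ℝ := 2 * ⟪x, y⟫ / ⟪y, y⟫

/-- A (reduced, crystallographic) root system in a real inner product space,
together with a chosen system of simple roots. -/
structure RootSystemData (V : Type) [NormedAddCommGroup V] [InnerProductSpace ℝ V] where
  roots : Finset V
  simples : Finset V
  simples_subset : simples ⊆ roots
  root_ne_zero : ∀ α ∈ roots, α ≠ 0
  pairing_int : ∀ α ∈ roots, ∀ β ∈ roots, ∃ n : ℤ, (n : ℝ) = cpair α β
  reflect_mem : ∀ α ∈ roots, ∀ β ∈ roots, reflVec α β ∈ roots
  reduced : ∀ α ∈ roots, ∀ t : ℝ, t • α ∈ roots → t = 1 ∨ t = -1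
  simples_indep : LinearIndependent ℝ (fun a : {x // x ∈ simples} => (a : V))
  root_pos_or_neg : ∀ β ∈ roots,
    (∃ c : V → ℕ, β = ∑ α ∈ simples, (c α : ℝ) • α) ∨
    (∃ c : V → ℕ, -β = ∑ α ∈ simples, (c α : ℝ) • α)

namespace RootSystemData

/-- `v` is a non-negative integer combination of the elements of `I`. -/
def IsPosCombOf (P : RootSystemData V) (I : Finset V) (v : V) : Prop :=
  ∃ c : V → ℕ, v = ∑ α ∈ I, (c α : ℝ) • α

/-- `v` is a non-negative integer combination of the simple roots. -/
def IsPosComb (P : RootSystemData V) (v : V) : Prop := P.IsPosCombOf P.simples v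

/-- The set of positive roots. -/
def Pos (P : RootSystemData V) : Set V := {β | β ∈ P.roots ∧ P.IsPosComb β}

/-- The set of negative roots. -/
def Neg (P : RootSystemData V) : Set V := {β | -β ∈ P.Pos}

/-- The positive roots lying in the root subsystem generated by `I`. -/
def PosOf (P : RootSystemData V) (I : Finset V) : Set V := {β | β ∈ P.roots ∧ P.IsPosCombOf I β}

/-- The half sum of the positive roots. -/
def rho (P : RootSystemData V) : V := (2 : ℝ)⁻¹ • ∑ᶠ β ∈ P.Pos, β

/-- The half sum of the positive roots in the root subsystem generated by `I`. -/
def rhoOf (P : RootSystemData V) (I : Finset V) : V := (2 : ℝ)⁻¹ • ∑ᶠ β ∈ P.PosOf I, β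

/-- The parabolic subgroup of the Weyl group generated by the reflections
in the elements of `I`. -/
def WeylOf (P : RootSystemData V) (I : Finset V) : Subgroup (V ≃ₗ[ℝ] V) :=
  Subgroup.closure (reflVec '' (I : Set V))

/-- The Weyl group, generated by the simple reflections. -/
def Weyl (P : RootSystemData V) : Subgroup (V ≃ₗ[ℝ] V) := P.WeylOf P.simples

/-- `l` is a word with letters in `I` whose associated product of reflections is `w`. -/
def IsWordOf (P : RootSystemData V) (I : Finset V) (l : List V) (w : V ≃ₗ[ℝ] V) : Prop :=
  (∀ α ∈ l, α ∈ I) ∧ (l.map reflVec).prod = w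

/-- The length of `w` with respect to the reflections in the elements of `I`. -/
def lengthOf (P : RootSystemData V) (I : Finset V) (w : V ≃ₗ[ℝ] V) : ℕ :=
  sInf {n | ∃ l, P.IsWordOf I l w ∧ l.length = n}

/-- The Coxeter length of `w` with respect to the simple reflections. -/
def length (P : RootSystemData V) (w : V ≃ₗ[ℝ] V) : ℕ := P.lengthOf P.simples w

/-- `l` is a reduced decomposition of `w` into simple reflections. -/
def IsReducedWord (P : RootSystemData V) (l : List V) (w : V ≃ₗ[ℝ] V) : Prop :=
  P.IsWordOf P.simples l w ∧ l.length = P.length w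

/-- The partial order on the root lattice: `x ≤ y` iff `y - x` is a non-negative
integer combination of simple roots. -/
def rootLE (P : RootSystemData V) (x y : V) : Prop := P.IsPosComb (y - x)

/-- The root system is simply laced: all roots have the same length. -/
def SimplyLaced (P : RootSystemData V) : Prop := ∀ α ∈ P.roots, ∀ β ∈ P.roots, ⟪α, α⟫ = ⟪β, β⟫

/-- The root system is irreducible: it admits no decomposition into two
non-empty mutually orthogonal parts. -/
def Irred (P : RootSystemData V) : Prop :=
  ∀ A B : Set V, (P.roots : Set V) ⊆ A ∪ B →
    (∀ a ∈ A ∩ (P.roots : Set V), ∀ b ∈ B ∩ (P.roots : Set V), ⟪a, b⟫ = 0) →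
    A ∩ (P.roots : Set V) = ∅ ∨ B ∩ (P.roots : Set V) = ∅

/-- `ϖ` is the fundamental weight associated with the simple root `α`. -/
def IsFundamentalWeight (P : RootSystemData V) (α ϖ : V) : Prop :=
  cpair ϖ α = 1 ∧ ∀ γ ∈ P.simples, γ ≠ α → cpair ϖ γ = 0

/-- The weight `ϖ` is minuscule: it pairs with every positive coroot by at most `1`. -/
def IsMinusculeWeight (P : RootSystemData V) (ϖ : V) : Prop := ∀ β ∈ P.Pos, cpair ϖ β ≤ 1

/-- The support of `w`: the set of simple roots whose reflections occur in a
reduced decomposition of `w`. -/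
def Supp (P : RootSystemData V) (w : V ≃ₗ[ℝ] V) : Set V :=
  {δ | δ ∈ P.simples ∧ ∃ l, P.IsReducedWord l w ∧ δ ∈ l}

end RootSystemData

/-!
Suppose `⟨μ, ν^∨⟩ < 0`. The positive roots `γ₁ = -w⁻¹μ` and `γ₂ = -w⁻¹ν` still make an obtuse
angle, so `γ₁ + γ₂` is a positive root. Each `γᵢ` is sent to a negative root by `w`, which keeps
the simple roots other than `α` positive; so `γᵢ` has a positive `α`-coefficient, whence
`⟨ϖ, γᵢ^∨⟩` is a positive integer and `|γᵢ|² ≤ 2 (ϖ, γᵢ)`. But then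
`|γ₁ + γ₂|² < |γ₁|² + |γ₂|² ≤ 2 (ϖ, γ₁ + γ₂)`, i.e. `⟨ϖ, (γ₁ + γ₂)^∨⟩ > 1`, against minusculity.
-/

lemma reflVec_eq_sub_cpair_smul (a x : V) : reflVec a x = x - cpair x a • a := rfl

lemma reflVec_reflVec (a x : V) : reflVec a (reflVec a x) = x := (reflVec a).left_inv x

lemma inner_reflVec_reflVec (a x y : V) : ⟪reflVec a x, reflVec a y⟫ = ⟪x, y⟫ := by
  rcases eq_or_ne a 0 with rfl | ha
  · simp [reflVec_eq_sub_cpair_smul]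
  · have h : ⟪a, a⟫ ≠ 0 := (real_inner_self_pos.2 ha).ne'
    simp only [reflVec_eq_sub_cpair_smul, cpair, inner_sub_left, inner_sub_right,
      real_inner_smul_left, real_inner_smul_right, real_inner_comm a x, real_inner_comm a y]
    field_simp
    ring

lemma inner_reflVec_right (a x y : V) : ⟪x, reflVec a y⟫ = ⟪reflVec a x, y⟫ := by
  rw [← inner_reflVec_reflVec a, reflVec_reflVec]

lemma ne_zero_of_cpair_ne_zero {x y : V} (h : cpair x y ≠ 0) : y ≠ 0 := by
  rintro rfl
  simp [cpair] at h

lemma inner_eq_cpair_mul {x y : V} (hy : y ≠ 0) : ⟪x, y⟫ = cpair x y * ⟪y, y⟫ / 2 := by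
  have := (real_inner_self_pos.2 hy).ne'
  unfold cpair
  field_simp

lemma cpair_neg_iff {x y : V} (hy : y ≠ 0) : cpair x y < 0 ↔ ⟪x, y⟫ < 0 := by
  rw [cpair, div_lt_iff₀ (real_inner_self_pos.2 hy), zero_mul]
  constructor <;> intro h <;> linarith

lemma cpair_pos_iff {x y : V} (hy : y ≠ 0) : 0 < cpair x y ↔ 0 < ⟪x, y⟫ := by
  rw [cpair, div_pos_iff_of_pos_right (real_inner_self_pos.2 hy)]
  constructor <;> intro h <;> linarith

lemma cpair_reflVec (x a y : V) : cpair x (reflVec a y) = cpair x y - cpair x a * cpair a y := by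
  rw [cpair, inner_reflVec_reflVec, inner_reflVec_right, reflVec_eq_sub_cpair_smul a x,
    inner_sub_left, real_inner_smul_left]
  unfold cpair
  ring

lemma reflVec_eq_add_of_cpair_eq_neg_one {x a : V} (h : cpair x a = -1) :
    reflVec a x = x + a := by
  rw [reflVec_eq_sub_cpair_smul, h, neg_one_smul, sub_neg_eq_add]

lemma add_eq_zero_of_cpair_le_neg_two {x y : V} (hxy : cpair x y ≤ -2) (hyx : cpair y x ≤ -2) :
    x + y = 0 := by
  have h1 : ⟪x, y⟫ = cpair x y * ⟪y, y⟫ / 2 :=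
    inner_eq_cpair_mul (ne_zero_of_cpair_ne_zero (by linarith))
  have h2 : ⟪x, y⟫ = cpair y x * ⟪x, x⟫ / 2 := by
    rw [real_inner_comm]
    exact inner_eq_cpair_mul (ne_zero_of_cpair_ne_zero (by linarith))
  rw [← real_inner_self_nonpos, real_inner_add_add_self]
  nlinarith [real_inner_self_nonneg (x := x), real_inner_self_nonneg (x := y)]

lemma one_lt_cpair_add {ϖ x y : V} (hx : 1 ≤ cpair ϖ x) (hy : 1 ≤ cpair ϖ y) (hxy : ⟪x, y⟫ < 0) :
    1 < cpair ϖ (x + y) := by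
  have hx0 := real_inner_self_pos.2 (ne_zero_of_cpair_ne_zero (by linarith : cpair ϖ x ≠ 0))
  have hy0 := real_inner_self_pos.2 (ne_zero_of_cpair_ne_zero (by linarith : cpair ϖ y ≠ 0))
  rw [cpair, le_div_iff₀ hx0] at hx
  rw [cpair, le_div_iff₀ hy0] at hy
  have hsum : ⟪x + y, x + y⟫ < 2 * ⟪ϖ, x + y⟫ := by
    rw [real_inner_add_add_self, inner_add_right]
    linarith
  have hpos : 0 < ⟪x + y, x + y⟫ := real_inner_self_pos.2 fun h => by simp [h] at hsum
  rw [cpair, lt_div_iff₀ hpos]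
  linarith

namespace RootSystemData

variable (P : RootSystemData V)

lemma eq_zero_of_sum_simples_smul_eq_zero {f : V → ℝ} (h : ∑ τ ∈ P.simples, f τ • τ = 0)
    {δ : V} (hδ : δ ∈ P.simples) : f δ = 0 :=
  (linearIndepOn_finset_iff (v := id) (s := P.simples)).mp P.simples_indep f h δ hδ

def posCombSubmonoid : AddSubmonoid V where
  carrier := {v | P.IsPosComb v}
  add_mem' := by
    rintro _ _ ⟨c, rfl⟩ ⟨d, rfl⟩
    exact ⟨c + d, by simp only [Pi.add_apply, Nat.cast_add, add_smul, Finset.sum_add_distrib]⟩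
  zero_mem' := ⟨0, by simp⟩

lemma isPosComb_sum_smul {ι : Type*} (s : Finset ι) (c : ι → ℕ) {g : ι → V}
    (hg : ∀ i ∈ s, P.IsPosComb (g i)) : P.IsPosComb (∑ i ∈ s, (c i : ℝ) • g i) :=
  P.posCombSubmonoid.sum_mem fun i hi => by
    rw [Nat.cast_smul_eq_nsmul]
    exact nsmul_mem (hg i hi) _

lemma not_isPosComb_neg_of_mem_pos {v : V} (hv : v ∈ P.Pos) : ¬ P.IsPosComb (-v) := by
  rintro ⟨d, hd⟩
  obtain ⟨hvr, c, hc⟩ := hv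
  have hcd : ∑ τ ∈ P.simples, ((c τ : ℝ) + d τ) • τ = 0 := by
    simp only [add_smul, Finset.sum_add_distrib, ← hc, ← hd, add_neg_cancel]
  refine P.root_ne_zero v hvr ?_
  rw [hc]
  refine Finset.sum_eq_zero fun τ hτ => ?_
  have hcdτ := P.eq_zero_of_sum_simples_smul_eq_zero hcd hτ
  have hcτ : (c τ : ℝ) = 0 := by
    linarith [(c τ).cast_nonneg (α := ℝ), (d τ).cast_nonneg (α := ℝ)]
  rw [hcτ, zero_smul]

lemma inner_map_map_of_mem_weylOf {I : Finset V} {w : V ≃ₗ[ℝ] V} (hw : w ∈ P.WeylOf I)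
    (x y : V) : ⟪w x, w y⟫ = ⟪x, y⟫ := by
  induction hw using Subgroup.closure_induction'' generalizing x y with
  | mem _ h =>
    obtain ⟨a, -, rfl⟩ := h
    exact inner_reflVec_reflVec a x y
  | inv_mem _ h =>
    obtain ⟨a, -, rfl⟩ := h
    exact inner_reflVec_reflVec a x y
  | one => rfl
  | mul u v _ _ hu hv => exact (hu _ _).trans (hv _ _)

lemma exists_simple_inner_pos {γ : V} (hγ : γ ∈ P.Pos) : ∃ δ ∈ P.simples, 0 < ⟪γ, δ⟫ := by
  obtain ⟨hγr, c, hc⟩ := hγ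
  by_contra! h
  refine P.root_ne_zero γ hγr (real_inner_self_nonpos.1 ?_)
  calc ⟪γ, γ⟫ = ∑ δ ∈ P.simples, (c δ : ℝ) * ⟪γ, δ⟫ := by
        nth_rw 2 [hc]
        simp only [inner_sum, real_inner_smul_right]
    _ ≤ 0 := Finset.sum_nonpos fun δ hδ => mul_nonpos_of_nonneg_of_nonpos (by positivity) (h δ hδ)

lemma reflVec_mem_pos {γ δ : V} (hγ : γ ∈ P.Pos) (hδ : δ ∈ P.simples) (hne : γ ≠ δ) :
    reflVec δ γ ∈ P.Pos := by
  classical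
  obtain ⟨hγr, c, hc⟩ := hγ
  have hδr := P.simples_subset hδ
  -- `s_δ γ = γ - ⟨γ, δ^∨⟩ δ` keeps the coefficients of `γ` away from `δ`, not all of which vanish
  obtain ⟨η, hη, hηδ, hcη⟩ : ∃ η ∈ P.simples, η ≠ δ ∧ c η ≠ 0 := by
    by_contra! h
    have hγδ : γ = (c δ : ℝ) • δ := by
      rw [hc, Finset.sum_eq_single δ (fun η hη hne => by simp [h η hη hne]) (absurd hδ)]
    rcases P.reduced δ hδr _ (hγδ ▸ hγr) with h1 | h1
    · exact hne (by rw [hγδ, h1, one_smul])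
    · linarith [(c δ).cast_nonneg (α := ℝ)]
  have hroot := P.reflect_mem δ hδr γ hγr
  refine ⟨hroot, (P.root_pos_or_neg _ hroot).resolve_right ?_⟩
  rintro ⟨d, hd⟩
  have hcd : ∑ τ ∈ P.simples, ((c τ : ℝ) + d τ - if τ = δ then cpair γ δ else 0) • τ = 0 := by
    simp only [sub_smul, add_smul, Finset.sum_sub_distrib, Finset.sum_add_distrib, ← hc, ← hd,
      ite_smul, zero_smul, Finset.sum_ite_eq', if_pos hδ, reflVec_eq_sub_cpair_smul]
    abel
  have hcdη := P.eq_zero_of_sum_simples_smul_eq_zero hcd hη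
  rw [if_neg hηδ, sub_zero] at hcdη
  have hcη0 : (c η : ℝ) = 0 := by
    linarith [(c η).cast_nonneg (α := ℝ), (d η).cast_nonneg (α := ℝ)]
  exact hcη (by exact_mod_cast hcη0)

lemma sum_lt_sum_of_eq_sub_smul {v δ : V} {t : ℝ} {c e : V → ℕ} (hδ : δ ∈ P.simples)
    (ht : 0 < t) (hc : v = ∑ τ ∈ P.simples, (c τ : ℝ) • τ)
    (he : v - t • δ = ∑ τ ∈ P.simples, (e τ : ℝ) • τ) :
    ∑ τ ∈ P.simples, e τ < ∑ τ ∈ P.simples, c τ := by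
  classical
  have hce : ∑ τ ∈ P.simples, ((e τ : ℝ) - c τ + if τ = δ then t else 0) • τ = 0 := by
    simp only [add_smul, sub_smul, Finset.sum_add_distrib, Finset.sum_sub_distrib, ← hc, ← he,
      ite_smul, zero_smul, Finset.sum_ite_eq', if_pos hδ]
    abel
  have hsum : ∑ τ ∈ P.simples, ((e τ : ℝ) - c τ + if τ = δ then t else 0) = 0 :=
    Finset.sum_eq_zero fun τ hτ => P.eq_zero_of_sum_simples_smul_eq_zero hce hτ
  rw [Finset.sum_add_distrib, Finset.sum_sub_distrib, Finset.sum_ite_eq', if_pos hδ] at hsum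
  exact_mod_cast (by linarith : ∑ τ ∈ P.simples, (e τ : ℝ) < ∑ τ ∈ P.simples, (c τ : ℝ))

/-- By induction on the height of `γ`: for a simple root `δ` with `(γ, δ) > 0`, the root
`γ' = s_δ γ` is positive of smaller height, and `⟨ϖ, γ^∨⟩ = ⟨ϖ, γ'^∨⟩ - ⟨ϖ, δ^∨⟩ ⟨δ, γ'^∨⟩`. -/
lemma exists_int_cpair_of_mem_pos {ϖ : V} (hϖ : ∀ δ ∈ P.simples, ∃ m : ℤ, cpair ϖ δ = m)
    {γ : V} (hγ : γ ∈ P.Pos) : ∃ m : ℤ, cpair ϖ γ = m := by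
  obtain ⟨hγr, c, hc⟩ := hγ
  induction hn : ∑ τ ∈ P.simples, c τ using Nat.strong_induction_on generalizing γ c with
  | _ n ih =>
  by_cases hs : γ ∈ P.simples
  · exact hϖ γ hs
  obtain ⟨δ, hδ, hγδ⟩ := P.exists_simple_inner_pos ⟨hγr, c, hc⟩
  have hδr := P.simples_subset hδ
  obtain ⟨hγ'r, e, he⟩ := P.reflVec_mem_pos ⟨hγr, c, hc⟩ hδ fun h => hs (h ▸ hδ)
  have hlt : ∑ τ ∈ P.simples, e τ < n := hn ▸ P.sum_lt_sum_of_eq_sub_smul hδ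
    ((cpair_pos_iff (P.root_ne_zero δ hδr)).2 hγδ) hc (by rwa [← reflVec_eq_sub_cpair_smul])
  obtain ⟨m, hm⟩ := ih _ hlt hγ'r e he rfl
  obtain ⟨a, ha⟩ := hϖ δ hδ
  obtain ⟨b, hb⟩ := P.pairing_int δ hδr _ hγ'r
  refine ⟨m - a * b, ?_⟩
  rw [← reflVec_reflVec δ γ, cpair_reflVec, hm, ha, ← hb]
  push_cast
  ring

lemma add_mem_roots {μ ν : V} (hμ : μ ∈ P.roots) (hν : ν ∈ P.roots) (hμν : ⟪μ, ν⟫ < 0)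
    (hne : μ + ν ≠ 0) : μ + ν ∈ P.roots := by
  obtain ⟨p, hp⟩ := P.pairing_int μ hμ ν hν
  obtain ⟨q, hq⟩ := P.pairing_int ν hν μ hμ
  have hp0 : (p : ℝ) < 0 := hp ▸ (cpair_neg_iff (P.root_ne_zero ν hν)).2 hμν
  have hq0 : (q : ℝ) < 0 :=
    hq ▸ (cpair_neg_iff (P.root_ne_zero μ hμ)).2 (real_inner_comm μ ν ▸ hμν)
  have hpq : p = -1 ∨ q = -1 ∨ (p ≤ -2 ∧ q ≤ -2) := by
    have : p < 0 := by exact_mod_cast hp0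
    have : q < 0 := by exact_mod_cast hq0
    omega
  rcases hpq with h | h | ⟨hp2, hq2⟩
  · rw [← reflVec_eq_add_of_cpair_eq_neg_one (by rw [← hp, h]; norm_num)]
    exact P.reflect_mem ν hν μ hμ
  · rw [add_comm, ← reflVec_eq_add_of_cpair_eq_neg_one (by rw [← hq, h]; norm_num)]
    exact P.reflect_mem μ hμ ν hν
  · exact absurd (add_eq_zero_of_cpair_le_neg_two (hp ▸ by exact_mod_cast hp2)
      (hq ▸ by exact_mod_cast hq2)) hne

lemma add_mem_pos {μ ν : V} (hμ : μ ∈ P.Pos) (hν : ν ∈ P.Pos) (hμν : ⟪μ, ν⟫ < 0) :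
    μ + ν ∈ P.Pos := by
  refine ⟨P.add_mem_roots hμ.1 hν.1 hμν fun h => ?_, P.posCombSubmonoid.add_mem hμ.2 hν.2⟩
  exact P.not_isPosComb_neg_of_mem_pos hμ (eq_neg_of_add_eq_zero_right h ▸ hν.2)

variable {P}

lemma IsFundamentalWeight.exists_int_cpair {α ϖ : V} (hfw : P.IsFundamentalWeight α ϖ) :
    ∀ δ ∈ P.simples, ∃ m : ℤ, cpair ϖ δ = m := by
  intro δ hδ
  by_cases h : δ = α
  · exact ⟨1, by rw [h, hfw.1, Int.cast_one]⟩
  · exact ⟨0, by rw [hfw.2 δ hδ h, Int.cast_zero]⟩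

lemma IsFundamentalWeight.inner_sum_smul {α ϖ : V} (hfw : P.IsFundamentalWeight α ϖ)
    (hα : α ∈ P.simples) (f : V → ℝ) :
    ⟪ϖ, ∑ τ ∈ P.simples, f τ • τ⟫ = f α * (⟪α, α⟫ / 2) := by
  rw [inner_sum, Finset.sum_eq_single α, real_inner_smul_right,
    inner_eq_cpair_mul (P.root_ne_zero α (P.simples_subset hα)), hfw.1]
  · ring
  · intro τ hτ hne
    rw [real_inner_smul_right, inner_eq_cpair_mul (P.root_ne_zero τ (P.simples_subset hτ)),
      hfw.2 τ hτ hne]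
    ring
  · exact absurd hα

variable (P) [DecidableEq V] {α : V} {w : V ≃ₗ[ℝ] V}

lemma coeff_ne_zero_of_map_mem_neg (hα : α ∈ P.simples)
    (hWI : ∀ γ ∈ P.simples.erase α, w γ ∈ P.Pos) {c : V → ℕ} {γ : V}
    (hc : γ = ∑ τ ∈ P.simples, (c τ : ℝ) • τ) (hwγ : w γ ∈ P.Neg) : c α ≠ 0 := by
  intro hcα
  have hwγ' : w γ = ∑ τ ∈ P.simples.erase α, (c τ : ℝ) • w τ := by
    rw [hc, ← Finset.add_sum_erase _ _ hα, hcα, Nat.cast_zero, zero_smul, zero_add, map_sum]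
    simp only [map_smul]
  apply P.not_isPosComb_neg_of_mem_pos hwγ
  rw [neg_neg, hwγ']
  exact P.isPosComb_sum_smul _ c fun τ hτ => (hWI τ hτ).2

lemma one_le_cpair_of_map_mem_neg {ϖ : V} (hα : α ∈ P.simples)
    (hfw : P.IsFundamentalWeight α ϖ) (hWI : ∀ γ ∈ P.simples.erase α, w γ ∈ P.Pos) {γ : V}
    (hγ : γ ∈ P.Pos) (hwγ : w γ ∈ P.Neg) : 1 ≤ cpair ϖ γ := by
  obtain ⟨m, hm⟩ := P.exists_int_cpair_of_mem_pos hfw.exists_int_cpair hγ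
  obtain ⟨hγr, c, hc⟩ := hγ
  have hcα := P.coeff_ne_zero_of_map_mem_neg hα hWI hc hwγ
  have hαα := real_inner_self_pos.2 (P.root_ne_zero α (P.simples_subset hα))
  have hpos : 0 < cpair ϖ γ := by
    rw [cpair_pos_iff (P.root_ne_zero γ hγr), hc, hfw.inner_sum_smul hα]
    exact mul_pos (Nat.cast_pos.2 (Nat.pos_of_ne_zero hcα)) (half_pos hαα)
  rw [hm] at hpos ⊢
  exact_mod_cast Int.cast_pos.1 hpos

end RootSystemData

/-- If `ϖ_α` is minuscule, `I = S \ {α}` and `w` is a minimal-length coset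
representative (`w(I) ⊆ R⁺`), then any two positive roots `μ, ν` sent to negative roots by
`w⁻¹` satisfy `⟨μ, ν^∨⟩ ≥ 0`. -/
theorem cpair_nonneg_of_inversions [DecidableEq V] (P : RootSystemData V)
    (α : V) (hα : α ∈ P.simples) (ϖ : V)
    (hfw : P.IsFundamentalWeight α ϖ) (hmin : P.IsMinusculeWeight ϖ)
    (w : V ≃ₗ[ℝ] V) (hw : w ∈ P.Weyl)
    (hWI : ∀ γ ∈ P.simples.erase α, w γ ∈ P.Pos)
    (μ ν : V) (hμ : μ ∈ P.Pos) (hν : ν ∈ P.Pos)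
    (hμ' : w.symm μ ∈ P.Neg) (hν' : w.symm ν ∈ P.Neg) :
    0 ≤ cpair μ ν := by
  by_contra hneg
  have hμν : ⟪μ, ν⟫ < 0 := (cpair_neg_iff (P.root_ne_zero ν hν.1)).1 (not_le.1 hneg)
  have hγ : ⟪-w.symm μ, -w.symm ν⟫ < 0 := by
    rwa [inner_neg_neg, ← P.inner_map_map_of_mem_weylOf hw, w.apply_symm_apply,
      w.apply_symm_apply]
  have hinv : ∀ x ∈ P.Pos, w (-w.symm x) ∈ P.Neg := fun x hx => by
    show -w (-w.symm x) ∈ P.Pos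
    rwa [map_neg, neg_neg, w.apply_symm_apply]
  have h1 := P.one_le_cpair_of_map_mem_neg hα hfw hWI hμ' (hinv μ hμ)
  have h2 := P.one_le_cpair_of_map_mem_neg hα hfw hWI hν' (hinv ν hν)
  exact (one_lt_cpair_add h1 h2 hγ).not_ge (hmin _ (P.add_mem_pos hμ' hν' hγ))
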